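/- If β ≤ 1 and n > 2, then the upper envelope of f over X ∩ W_{ij}, i.e. the convex hull of the hypograph {(x,z) ∈ (X ∩ W_{ij}) × ℝ : z ≤ f(x)}, equals H = {(x,z) ∈ ℝ₊ⁿ × ℝ : z ≤ ∏_{k=1}^n x_k^{a_k}, z ≤ u, p xᵢ ≤ x_j ≤ q xᵢ, and ∏_{k=1}^n x_k^{a_k} ≥ ℓ}. -/

import Mathlib

/-!
For `∑ a ≤ 1` the Cobb-Douglas function `f x = ∏ xₖ ^ aₖ` is concave on the orthant: by weighted
AM-GM (with the slack weight `1 - ∑ a` put on the value `1`), `f` lies below an affine function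
that touches it at any given positive point. Hence `H`, the hypograph of `min f u` over the convex
set `{ℓ ≤ f} ∩ W`, is convex, and it contains the hypograph of `f` over `X ∩ W`.

Conversely, a point `(x, z)` of `H` with `f x ≤ u` lies in that hypograph. If `f x > u`, pick a
coordinate `k ∉ {i, j}` and move along the line that scales `xₖ` by `1 + t` and all other
coordinates by `1 - t`; this keeps `x` in the orthant and in `W`, and `f` vanishes
at `t = ±1`. So the line meets `{f = u}` on both sides of `x`, at points of the hypograph
(as `z ≤ u`), and `(x, z)` is a convex combination of them.
-/

open Real Finset

lemma Convex.mem_of_add_smul_mem {E : Type*} [AddCommGroup E] [Module ℝ E] {s : Set E}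
    (hs : Convex ℝ s) {x v : E} {t₁ t₂ : ℝ} (h₁ : t₁ ≤ 0) (h₂ : 0 ≤ t₂)
    (hx₁ : x + t₁ • v ∈ s) (hx₂ : x + t₂ • v ∈ s) : x ∈ s := by
  have hline : ⇑(AffineMap.lineMap x (x + v)) = fun t : ℝ => x + t • v := by
    ext t; simp [AffineMap.lineMap_apply, add_comm]
  have hconn := (hs.affine_preimage (AffineMap.lineMap x (x + v))).ordConnected
  rw [hline] at hconn
  simpa using hconn.out hx₁ hx₂ ⟨h₁, h₂⟩

lemma convex_setOf_mul_le_and_le_mul {ι : Type*} (i j : ι) (p q : ℝ) :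
    Convex ℝ {x : ι → ℝ | p * x i ≤ x j ∧ x j ≤ q * x i} := by
  rintro x ⟨hpx, hqx⟩ y ⟨hpy, hqy⟩ μ ν hμ hν -
  simp only [Set.mem_ofPred_eq, Pi.add_apply, Pi.smul_apply, smul_eq_mul]
  constructor
  · nlinarith [mul_le_mul_of_nonneg_left hpx hμ, mul_le_mul_of_nonneg_left hpy hν]
  · nlinarith [mul_le_mul_of_nonneg_left hqx hμ, mul_le_mul_of_nonneg_left hqy hν]

lemma ConcaveOn.convex_truncated_hypograph {E : Type*} [AddCommGroup E] [Module ℝ E] {s K : Set E}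
    {f : E → ℝ} (hf : ConcaveOn ℝ s f) (hK : Convex ℝ K) (ℓ u : ℝ) :
    Convex ℝ {xz : E × ℝ | xz.1 ∈ s ∧ xz.2 ≤ f xz.1 ∧ xz.2 ≤ u ∧ xz.1 ∈ K ∧ ℓ ≤ f xz.1} := by
  have hdom : Convex ℝ ({x ∈ s | ℓ ≤ f x} ∩ K) := (hf.convex_ge ℓ).inter hK
  have hg := ((hf.subset (fun x hx => hx.1.1) hdom).inf (concaveOn_const u hdom)).convex_hypograph
  convert hg using 1
  ext ⟨x, z⟩
  simp only [Set.mem_ofPred_eq, Set.mem_inter_iff, Pi.inf_apply, le_inf_iff]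
  tauto

section CobbDouglas

variable {ι : Type*} [Fintype ι] {a : ι → ℝ}

lemma prod_rpow_le_sum_mul_add (ha : ∀ k, 0 ≤ a k) (hβ : ∑ k, a k ≤ 1) {t : ι → ℝ}
    (ht : ∀ k, 0 ≤ t k) :
    ∏ k, t k ^ a k ≤ ∑ k, a k * t k + (1 - ∑ k, a k) := by
  have h := geom_mean_le_arith_mean_weighted (univ : Finset (Option ι))
    (fun o => o.elim (1 - ∑ k, a k) a) (fun o => o.elim 1 t)
    (by rintro (_ | k) _ <;> simp [ha, sub_nonneg.2 hβ])
    (by simp [Fintype.sum_option]) (by rintro (_ | k) _ <;> simp [ht])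
  simpa [Fintype.prod_option, Fintype.sum_option, add_comm] using h

lemma prod_rpow_le_mul_sum_div (ha : ∀ k, 0 ≤ a k) (hβ : ∑ k, a k ≤ 1) {c w : ι → ℝ}
    (hc : ∀ k, 0 < c k) (hw : ∀ k, 0 ≤ w k) :
    ∏ k, w k ^ a k ≤ (∏ k, c k ^ a k) * (∑ k, a k * (w k / c k) + (1 - ∑ k, a k)) := by
  have hsplit : ∏ k, w k ^ a k = (∏ k, c k ^ a k) * ∏ k, (w k / c k) ^ a k := by
    rw [← prod_mul_distrib]
    refine prod_congr rfl fun k _ => ?_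
    rw [← mul_rpow (hc k).le (div_nonneg (hw k) (hc k).le), mul_div_cancel₀ _ (hc k).ne']
  rw [hsplit]
  exact mul_le_mul_of_nonneg_left
    (prod_rpow_le_sum_mul_add ha hβ fun k => div_nonneg (hw k) (hc k).le)
    (prod_nonneg fun k _ => rpow_nonneg (hc k).le _)

lemma mul_prod_rpow_eq_zero (ha : ∀ k, 0 < a k) {μ : ℝ} {x : ι → ℝ} {k : ι}
    (h : μ * x k = 0) : μ * ∏ m, x m ^ a m = 0 := by
  rcases mul_eq_zero.1 h with hμ | hx
  · rw [hμ, zero_mul]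
  · rw [prod_eq_zero (mem_univ k) (by rw [hx, zero_rpow (ha k).ne']), mul_zero]

theorem concaveOn_prod_rpow (ha : ∀ k, 0 < a k) (hβ : ∑ k, a k ≤ 1) :
    ConcaveOn ℝ (Set.Ici 0) fun x : ι → ℝ => ∏ k, x k ^ a k := by
  refine ⟨convex_Ici 0, fun x hx y hy μ ν hμ hν hμν => ?_⟩
  simp only [Set.mem_Ici, Pi.le_def, Pi.zero_apply] at hx hy
  simp only [smul_eq_mul, Pi.add_apply, Pi.smul_apply]
  set c : ι → ℝ := fun k => μ * x k + ν * y k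
  have hc₀ : ∀ k, 0 ≤ c k := fun k => add_nonneg (mul_nonneg hμ (hx k)) (mul_nonneg hν (hy k))
  by_cases hc : ∀ k, 0 < c k
  · have hsum : μ * ∑ k, a k * (x k / c k) + ν * ∑ k, a k * (y k / c k) = ∑ k, a k := by
      rw [mul_sum, mul_sum, ← sum_add_distrib]
      refine sum_congr rfl fun k _ => ?_
      have := (hc k).ne'
      field_simp
      rfl
    have ha₀ : ∀ k, 0 ≤ a k := fun k => (ha k).le
    calc μ * ∏ k, x k ^ a k + ν * ∏ k, y k ^ a k
        ≤ μ * ((∏ k, c k ^ a k) * (∑ k, a k * (x k / c k) + (1 - ∑ k, a k)))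
          + ν * ((∏ k, c k ^ a k) * (∑ k, a k * (y k / c k) + (1 - ∑ k, a k))) := by
          gcongr
          exacts [prod_rpow_le_mul_sum_div ha₀ hβ hc hx, prod_rpow_le_mul_sum_div ha₀ hβ hc hy]
      _ = ∏ k, c k ^ a k := by
          linear_combination (∏ k, c k ^ a k) * hsum + (∏ k, c k ^ a k) * (1 - ∑ k, a k) * hμν
  · -- a vanishing coordinate of the combination vanishes in both summands
    push Not at hc
    obtain ⟨k, hk⟩ := hc
    have hx₀ : μ * x k = 0 := by nlinarith [mul_nonneg hμ (hx k), mul_nonneg hν (hy k), hc₀ k]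
    have hy₀ : ν * y k = 0 := by nlinarith [mul_nonneg hμ (hx k), mul_nonneg hν (hy k), hc₀ k]
    rw [mul_prod_rpow_eq_zero ha hx₀, mul_prod_rpow_eq_zero ha hy₀, zero_add]
    exact prod_nonneg fun m _ => rpow_nonneg (hc₀ m) _

theorem continuous_prod_rpow (ha : ∀ k, 0 ≤ a k) :
    Continuous fun x : ι → ℝ => ∏ k, x k ^ a k :=
  continuous_finsetProd _ fun k _ => (continuous_rpow_const (ha k)).comp (continuous_apply k)

end CobbDouglas

section Tilt

variable {ι : Type*} [DecidableEq ι]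

def tilt (x : ι → ℝ) (k : ι) : ι → ℝ := fun m => if m = k then x m else -x m

lemma add_smul_tilt_apply_self (x : ι → ℝ) (k : ι) (t : ℝ) :
    (x + t • tilt x k) k = (1 + t) * x k := by
  simp [tilt]; ring

lemma add_smul_tilt_apply_of_ne (x : ι → ℝ) {k m : ι} (hm : m ≠ k) (t : ℝ) :
    (x + t • tilt x k) m = (1 - t) * x m := by
  simp [tilt, hm]; ring

lemma add_smul_tilt_nonneg {x : ι → ℝ} (hx : ∀ m, 0 ≤ x m) (k : ι) {t : ℝ}
    (ht : t ∈ Set.Icc (-1) 1) (m : ι) : 0 ≤ (x + t • tilt x k) m := by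
  obtain ⟨ht₁, ht₂⟩ := ht
  rcases eq_or_ne m k with rfl | hm
  · rw [add_smul_tilt_apply_self]; exact mul_nonneg (by linarith) (hx m)
  · rw [add_smul_tilt_apply_of_ne x hm]; exact mul_nonneg (by linarith) (hx m)

lemma add_smul_tilt_mem_cone {x : ι → ℝ} {i j k : ι} (hi : i ≠ k) (hj : j ≠ k) {t : ℝ}
    (ht : t ≤ 1) {p q : ℝ} (hx : p * x i ≤ x j ∧ x j ≤ q * x i) :
    p * (x + t • tilt x k) i ≤ (x + t • tilt x k) j ∧
      (x + t • tilt x k) j ≤ q * (x + t • tilt x k) i := by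
  have h1t : 0 ≤ 1 - t := by linarith
  simp only [add_smul_tilt_apply_of_ne x hi, add_smul_tilt_apply_of_ne x hj, mul_left_comm p,
    mul_left_comm q]
  exact ⟨mul_le_mul_of_nonneg_left hx.1 h1t, mul_le_mul_of_nonneg_left hx.2 h1t⟩

variable [Fintype ι] {a : ι → ℝ}

lemma exists_prod_rpow_add_smul_tilt_eq (ha : ∀ k, 0 < a k) {x : ι → ℝ}
    {i k : ι} (hik : i ≠ k) {u : ℝ} (hu : 0 ≤ u) (hxu : u ≤ ∏ m, x m ^ a m) :
    (∃ t ∈ Set.Icc (-1 : ℝ) 0, ∏ m, (x + t • tilt x k) m ^ a m = u) ∧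
      ∃ t ∈ Set.Icc (0 : ℝ) 1, ∏ m, (x + t • tilt x k) m ^ a m = u := by
  set g : ℝ → ℝ := fun t => ∏ m, (x + t • tilt x k) m ^ a m
  have hg : Continuous g := (continuous_prod_rpow fun m => (ha m).le).comp (by fun_prop)
  have hg₀ : g 0 = ∏ m, x m ^ a m := by simp [g]
  have hg_neg : g (-1) = 0 :=
    prod_eq_zero (mem_univ k) (by rw [add_smul_tilt_apply_self]; simp [zero_rpow (ha k).ne'])
  have hg_pos : g 1 = 0 :=
    prod_eq_zero (mem_univ i) (by rw [add_smul_tilt_apply_of_ne x hik]; simp [zero_rpow (ha i).ne'])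
  exact ⟨intermediate_value_Icc (by norm_num) hg.continuousOn ⟨hg_neg ▸ hu, hg₀ ▸ hxu⟩,
    intermediate_value_Icc' (by norm_num) hg.continuousOn ⟨hg_pos ▸ hu, hg₀ ▸ hxu⟩⟩

end Tilt

theorem upper_envelope_eq_of_beta_le_one_general (n : ℕ) (hn : 2 < n) (a : Fin n → ℝ)
    (ha : ∀ k, 0 < a k) (ℓ u : ℝ) (hℓ : 0 < ℓ) (hℓu : ℓ < u)
    (i j : Fin n) (p q : ℝ)
    (β : ℝ) (hβ : β = ∑ k, a k) (hβ1 : β ≤ 1) :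
    convexHull ℝ
      {xz : (Fin n → ℝ) × ℝ |
        ((∀ k, 0 ≤ xz.1 k) ∧
          ℓ ≤ ∏ k, xz.1 k ^ a k ∧ (∏ k, xz.1 k ^ a k) ≤ u ∧
          p * xz.1 i ≤ xz.1 j ∧ xz.1 j ≤ q * xz.1 i) ∧
        xz.2 ≤ ∏ k, xz.1 k ^ a k} =
    {xz : (Fin n → ℝ) × ℝ |
        (∀ k, 0 ≤ xz.1 k) ∧
        xz.2 ≤ ∏ k, xz.1 k ^ a k ∧
        xz.2 ≤ u ∧
        p * xz.1 i ≤ xz.1 j ∧ xz.1 j ≤ q * xz.1 i ∧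
        ℓ ≤ ∏ k, xz.1 k ^ a k} := by
  subst hβ
  have hH := (concaveOn_prod_rpow ha hβ1).convex_truncated_hypograph
    (convex_setOf_mul_le_and_le_mul i j p q) ℓ u
  simp only [Set.mem_Ici, Pi.le_def, Pi.zero_apply, Set.mem_ofPred_eq, and_assoc] at hH
  refine subset_antisymm (convexHull_min ?_ hH) ?_
  · rintro ⟨x, z⟩ ⟨⟨hx, hℓx, hxu, hpqx⟩, hzx⟩
    exact ⟨hx, hzx, hzx.trans hxu, hpqx.1, hpqx.2, hℓx⟩
  rintro ⟨x, z⟩ ⟨hx, hzx, hzu, hpx, hqx, hℓx⟩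
  rcases le_or_gt (∏ k, x k ^ a k) u with hxu | hux
  · exact subset_convexHull ℝ _ ⟨⟨hx, hℓx, hxu, hpx, hqx⟩, hzx⟩
  obtain ⟨k, hki, hkj⟩ := ENat.exists_ne_ne_of_three_le (by simpa using Nat.succ_le_of_lt hn) i j
  obtain ⟨⟨t₁, ht₁, hx₁⟩, t₂, ht₂, hx₂⟩ :=
    exists_prod_rpow_add_smul_tilt_eq ha hki.symm (hℓ.trans hℓu).le hux.le
  set S : Set ((Fin n → ℝ) × ℝ) := {xz | ((∀ k, 0 ≤ xz.1 k) ∧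
    ℓ ≤ ∏ k, xz.1 k ^ a k ∧ (∏ k, xz.1 k ^ a k) ≤ u ∧
    p * xz.1 i ≤ xz.1 j ∧ xz.1 j ≤ q * xz.1 i) ∧ xz.2 ≤ ∏ k, xz.1 k ^ a k}
  have hmem : ∀ t ∈ Set.Icc (-1 : ℝ) 1, ∏ m, (x + t • tilt x k) m ^ a m = u →
      (x, z) + t • (tilt x k, (0 : ℝ)) ∈ convexHull ℝ S := by
    intro t ht hxt
    rw [Prod.smul_mk, Prod.mk_add_mk, smul_zero, add_zero]
    exact subset_convexHull ℝ S ⟨⟨add_smul_tilt_nonneg hx k ht, hℓu.le.trans_eq hxt.symm, hxt.le,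
      add_smul_tilt_mem_cone hki.symm hkj.symm ht.2 ⟨hpx, hqx⟩⟩, hzu.trans_eq hxt.symm⟩
  exact (convex_convexHull ℝ S).mem_of_add_smul_mem ht₁.2 ht₂.1
    (hmem t₁ ⟨ht₁.1, ht₁.2.trans zero_le_one⟩ hx₁) (hmem t₂ ⟨by linarith [ht₂.1], ht₂.2⟩ hx₂)

/-- For `β ≤ 1` and `n > 2`, the upper envelope of `f` over `X ∩ W_{ij}`
equals `H`. -/
theorem upper_envelope_eq_of_beta_le_one (n : ℕ) (hn : 2 < n) (a : Fin n → ℝ)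
    (ha : ∀ k, 0 < a k) (ℓ u : ℝ) (hℓ : 0 < ℓ) (hℓu : ℓ < u)
    (i j : Fin n) (hij : i ≠ j) (p q : ℝ) (hp : 0 < p) (hpq : p < q)
    (β : ℝ) (hβ : β = ∑ k, a k) (hβ1 : β ≤ 1) :
    convexHull ℝ
      {xz : (Fin n → ℝ) × ℝ |
        ((∀ k, 0 ≤ xz.1 k) ∧
          ℓ ≤ ∏ k, xz.1 k ^ a k ∧ (∏ k, xz.1 k ^ a k) ≤ u ∧
          p * xz.1 i ≤ xz.1 j ∧ xz.1 j ≤ q * xz.1 i) ∧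
        xz.2 ≤ ∏ k, xz.1 k ^ a k} =
    {xz : (Fin n → ℝ) × ℝ |
        (∀ k, 0 ≤ xz.1 k) ∧
        xz.2 ≤ ∏ k, xz.1 k ^ a k ∧
        xz.2 ≤ u ∧
        p * xz.1 i ≤ xz.1 j ∧ xz.1 j ≤ q * xz.1 i ∧
        ℓ ≤ ∏ k, xz.1 k ^ a k} :=
  upper_envelope_eq_of_beta_le_one_general n hn a ha ℓ u hℓ hℓu i j p q β hβ hβ1
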